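/- Let N_{r,s}(U) and N_{r̃,s̃}(Ũ) be pseudo H-type Lie algebras with dim U = dim Ũ and r + s = r̃ + s̃, r ≠ s. If Φ : N_{r,s}(U) → N_{r̃,s̃}(Ũ) is a Lie algebra isomorphism, then (r̃, s̃) = (r, s) or (r̃, s̃) = (s, r). -/

import Mathlib

/-- The standard pseudo-Euclidean bilinear form of signature `(r, n - r)` on `ℝⁿ`:
`⟨x, y⟩ = ∑_{i<r} x_i y_i − ∑_{i≥r} x_i y_i`. -/
noncomputable def stdForm (n r : ℕ) : LinearMap.BilinForm ℝ (Fin n → ℝ) :=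
  Matrix.toBilin' (Matrix.diagonal fun i : Fin n => if (i : ℕ) < r then (1 : ℝ) else -1)

/-!
A vector `z` of the centre is null iff `J z` is singular, so it suffices to see that the
isomorphism relates the null cones of the two centres by a linear isomorphism. Because
`J z = 0` forces `z = 0`, the brackets span the centre, hence `Φ` maps centre onto centre,
inducing `φ`. If `J' w` kills `x' ≠ 0`, then the transpose `ψ` of `φ` satisfies
`J (ψ w) x = 0` for the `U`-component `x` of `Φ⁻¹ x'`, so `ψ` maps null vectors to null vectors;
so does the transpose built from `Φ⁻¹`. Therefore both forms have the same Witt index, i.e. the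
same maximal dimension `min r s = min r' s'` of a totally null subspace, and with
`r + s = r' + s'` this determines `{r', s'} = {r, s}`.
-/

open LinearMap (BilinForm)
open Module (finrank)

theorem Fintype.sum_extend_mul_self {ι κ : Type*} [Fintype ι] [Fintype κ] {e : ι → κ}
    (he : e.Injective) (c : ι → ℝ) :
    ∑ j, Function.extend e c 0 j * Function.extend e c 0 j = ∑ i, c i * c i :=
  (Fintype.sum_of_injective e he _ _
    (fun j hj => by simp [Function.extend_apply' _ _ _ hj])
    (fun i => by simp [he.extend_apply])).symm

namespace stdForm

theorem isSymm (n r : ℕ) : (stdForm n r).IsSymm :=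
  Matrix.isSymm_toBilin'_iff_isSymm.2 (Matrix.isSymm_diagonal _)

theorem nondegenerate (n r : ℕ) : (stdForm n r).Nondegenerate := by
  refine Matrix.nondegenerate_toBilin'_iff.2 (Matrix.nondegenerate_of_det_ne_zero ?_)
  rw [Matrix.det_diagonal, Finset.prod_ne_zero_iff]
  intro i _
  split_ifs <;> norm_num

theorem self_apply (r s : ℕ) (v : Fin (r + s) → ℝ) :
    stdForm (r + s) r v v =
      ∑ i : Fin r, v (Fin.castAdd s i) * v (Fin.castAdd s i) -
        ∑ j : Fin s, v (Fin.natAdd r j) * v (Fin.natAdd r j) := by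
  simp [stdForm, Matrix.toBilin'_apply', dotProduct, Matrix.mulVec_diagonal, Fin.sum_univ_add,
    sub_eq_add_neg]

theorem eq_zero_of_isotropic {r s : ℕ} {v : Fin (r + s) → ℝ} (hv : stdForm (r + s) r v v = 0)
    (h : (∀ i, v (Fin.castAdd s i) = 0) ∨ ∀ j, v (Fin.natAdd r j) = 0) : v = 0 := by
  rw [self_apply, sub_eq_zero] at hv
  have hiff := Finset.sum_mul_self_eq_zero_iff Finset.univ fun i => v (Fin.castAdd s i)
  rw [hv, Finset.sum_mul_self_eq_zero_iff] at hiff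
  simp only [Finset.mem_univ, true_implies] at hiff
  have hlow : ∀ i, v (Fin.castAdd s i) = 0 := h.elim id hiff.1
  have hhigh : ∀ j, v (Fin.natAdd r j) = 0 := h.elim hiff.2 id
  funext i
  induction i using Fin.addCases with
  | left i => exact hlow i
  | right j => exact hhigh j

theorem finrank_le_min_of_isotropic {n r s : ℕ} (hrs : r + s = n) {S : Submodule ℝ (Fin n → ℝ)}
    (hS : ∀ v ∈ S, stdForm n r v v = 0) : finrank ℝ S ≤ min r s := by
  subst hrs
  have key : ∀ {m : ℕ} (σ : Fin m → Fin (r + s)),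
      (∀ v ∈ S, (∀ i, v (σ i) = 0) → v = 0) → finrank ℝ S ≤ m := by
    intro m σ hσ
    have hinj : Function.Injective (LinearMap.funLeft ℝ ℝ σ ∘ₗ S.subtype) :=
      (injective_iff_map_eq_zero _).2 fun v hv =>
        Subtype.ext (hσ v v.2 fun i => congrFun hv i)
    simpa using LinearMap.finrank_le_finrank_of_injective hinj
  exact le_min (key (Fin.castAdd s) fun v hv h => eq_zero_of_isotropic (hS v hv) (.inl h))
    (key (Fin.natAdd r) fun v hv h => eq_zero_of_isotropic (hS v hv) (.inr h))

theorem exists_isotropic_finrank_eq_min {n r s : ℕ} (hrs : r + s = n) :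
    ∃ S : Submodule ℝ (Fin n → ℝ), (∀ v ∈ S, stdForm n r v v = 0) ∧ finrank ℝ S = min r s := by
  subst hrs
  -- `ι c` places `c` on the first `min r s` coordinates of both the positive and the negative block
  let ι : (Fin (min r s) → ℝ) →ₗ[ℝ] Fin (r + s) → ℝ := LinearMap.pi <| Fin.addCases
    (fun i => LinearMap.proj i ∘ₗ Function.ExtendByZero.linearMap ℝ (Fin.castLE (min_le_left r s)))
    (fun j => LinearMap.proj j ∘ₗ Function.ExtendByZero.linearMap ℝ (Fin.castLE (min_le_right r s)))
  have hext : ∀ {k} (h : min r s ≤ k) c i,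
      Function.ExtendByZero.linearMap ℝ (Fin.castLE h) c i = Function.extend (Fin.castLE h) c 0 i :=
    fun _ _ _ => rfl
  have hι : Function.Injective ι := by
    refine (injective_iff_map_eq_zero _).2 fun c hc => funext fun k => ?_
    have := congrFun hc (Fin.castAdd s (Fin.castLE (min_le_left r s) k))
    simpa [ι, hext, (Fin.castLE_injective _).extend_apply] using this
  refine ⟨LinearMap.range ι, ?_, by simp [LinearMap.finrank_range_of_inj hι]⟩
  rintro _ ⟨c, rfl⟩
  simp [self_apply, ι, hext, Fintype.sum_extend_mul_self (Fin.castLE_injective _)]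

theorem min_le_min_of_isotropic {n r s r' s' : ℕ} (hrs : r + s = n) (hr's' : r' + s' = n)
    (e : (Fin n → ℝ) ≃ₗ[ℝ] (Fin n → ℝ))
    (he : ∀ w, stdForm n r' w w = 0 → stdForm n r (e w) (e w) = 0) : min r' s' ≤ min r s := by
  obtain ⟨S, hS, hSrank⟩ := exists_isotropic_finrank_eq_min hr's'
  have hmap : ∀ v ∈ S.map e.toLinearMap, stdForm n r v v = 0 := by
    rintro _ ⟨w, hw, rfl⟩
    exact he w (hS w hw)
  have := finrank_le_min_of_isotropic hrs hmap
  rwa [LinearEquiv.finrank_map_eq, hSrank] at this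

end stdForm

section Clifford

variable {U V : Type*} [AddCommGroup U] [Module ℝ U] [AddCommGroup V] [Module ℝ V]
  {Q : BilinForm ℝ V} {J : V →ₗ[ℝ] Module.End ℝ U}

theorem bilin_self_eq_zero_of_apply_eq_zero
    (hJ : ∀ z, J z * J z = -(Q z z) • (1 : Module.End ℝ U))
    {z : V} {x : U} (hx : x ≠ 0) (hJx : J z x = 0) : Q z z = 0 := by
  have h : -(Q z z) • x = 0 := by simpa [hJx] using (LinearMap.congr_fun (hJ z) x).symm
  exact neg_eq_zero.1 ((smul_eq_zero.1 h).resolve_right hx)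

theorem exists_apply_eq_zero_of_bilin_self_eq_zero [Nontrivial U]
    (hJ : ∀ z, J z * J z = -(Q z z) • (1 : Module.End ℝ U)) {z : V} (hz : Q z z = 0) :
    ∃ x ≠ 0, J z x = 0 := by
  obtain ⟨x, hx⟩ := exists_ne (0 : U)
  by_cases hJx : J z x = 0
  · exact ⟨x, hx, hJx⟩
  · exact ⟨J z x, hJx, by simpa [hz] using LinearMap.congr_fun (hJ z) x⟩

theorem injective_of_clifford [Nontrivial U] (hQ : Q.SeparatingLeft) (hQs : Q.IsSymm)
    (hJ : ∀ z, J z * J z = -(Q z z) • (1 : Module.End ℝ U)) : Function.Injective J := by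
  refine (injective_iff_map_eq_zero J).2 fun z hz => hQ z fun w => ?_
  obtain ⟨x, hx⟩ := exists_ne (0 : U)
  have hsq v : J v (J v x) = -(Q v v) • x := LinearMap.congr_fun (hJ v) x
  have hzz : Q z z = 0 := bilin_self_eq_zero_of_apply_eq_zero hJ hx (by simp [hz])
  -- polarization: `J (z + w) ^ 2 = J w ^ 2` because `J z = 0`
  have h := hsq (z + w)
  simp only [map_add, hz, zero_add, LinearMap.add_apply, hsq w] at h
  rw [← sub_eq_zero, ← sub_smul, smul_eq_zero, ← hQs.eq z w, hzz] at h
  linarith [h.resolve_right hx]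

variable [FiniteDimensional ℝ V] {BU : BilinForm ℝ U} {br : U →ₗ[ℝ] U →ₗ[ℝ] V}

theorem span_bracket_eq_top (hBU : BU.SeparatingLeft) (hQ : Q.Nondegenerate)
    (hJ : Function.Injective J) (hbr : ∀ z x y, BU (J z x) y = Q z (br x y)) :
    Submodule.span ℝ (Set.range fun p : U × U => br p.1 p.2) = ⊤ := by
  rw [← Submodule.dualAnnihilator_eq_bot_iff, eq_bot_iff]
  intro f hf
  rw [Submodule.mem_dualAnnihilator] at hf
  set z := (Q.toDual hQ).symm f
  have hJz : J z = 0 := by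
    ext x
    refine hBU _ fun y => ?_
    rw [hbr, LinearMap.BilinForm.apply_toDual_symm_apply]
    exact hf _ (Submodule.subset_span ⟨(x, y), rfl⟩)
  simpa [z] using (injective_iff_map_eq_zero J).1 hJ z hJz

end Clifford

section Isomorphism

variable {U W V V' : Type*} [AddCommGroup U] [Module ℝ U] [AddCommGroup W] [Module ℝ W]
  [AddCommGroup V] [Module ℝ V] [AddCommGroup V'] [Module ℝ V']

def PreservesBracket (Φ : (U × V) ≃ₗ[ℝ] (W × V')) (br : U →ₗ[ℝ] U →ₗ[ℝ] V)
    (br' : W →ₗ[ℝ] W →ₗ[ℝ] V') : Prop :=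
  ∀ a b : U × V, Φ (0, br a.1 b.1) = (0, br' (Φ a).1 (Φ b).1)

variable {Φ : (U × V) ≃ₗ[ℝ] (W × V')} {br : U →ₗ[ℝ] U →ₗ[ℝ] V} {br' : W →ₗ[ℝ] W →ₗ[ℝ] V'}

namespace PreservesBracket

theorem symm (hΦ : PreservesBracket Φ br br') : PreservesBracket Φ.symm br' br := by
  intro c d
  rw [Φ.symm_apply_eq, hΦ, Φ.apply_symm_apply, Φ.apply_symm_apply]

theorem fst_apply_inr (hΦ : PreservesBracket Φ br br')
    (hspan : Submodule.span ℝ (Set.range fun p : U × U => br p.1 p.2) = ⊤) (v : V) :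
    (Φ (0, v)).1 = 0 := by
  let T : V →ₗ[ℝ] W := LinearMap.fst ℝ W V' ∘ₗ Φ.toLinearMap ∘ₗ LinearMap.inr ℝ U V
  have hT : Submodule.span ℝ (Set.range fun p : U × U => br p.1 p.2) ≤ LinearMap.ker T := by
    rw [Submodule.span_le]
    rintro _ ⟨⟨x, y⟩, rfl⟩
    simpa [T] using congrArg Prod.fst (hΦ (x, 0) (y, 0))
  rw [hspan, top_le_iff, LinearMap.ker_eq_top] at hT
  exact LinearMap.congr_fun hT v

theorem exists_centerEquiv (hΦ : PreservesBracket Φ br br')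
    (hspan : Submodule.span ℝ (Set.range fun p : U × U => br p.1 p.2) = ⊤)
    (hspan' : Submodule.span ℝ (Set.range fun p : W × W => br' p.1 p.2) = ⊤) :
    ∃ φ : V ≃ₗ[ℝ] V', ∀ v, Φ (0, v) = (0, φ v) := by
  have h₁ v : Φ (0, v) = (0, (Φ (0, v)).2) := Prod.ext (hΦ.fst_apply_inr hspan v) rfl
  have h₂ w : Φ.symm (0, w) = (0, (Φ.symm (0, w)).2) :=
    Prod.ext (hΦ.symm.fst_apply_inr hspan' w) rfl
  refine ⟨LinearEquiv.ofLinearMap (LinearMap.snd ℝ W V' ∘ₗ Φ.toLinearMap ∘ₗ LinearMap.inr ℝ U V)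
    (LinearMap.snd ℝ U V ∘ₗ Φ.symm.toLinearMap ∘ₗ LinearMap.inr ℝ W V') ?_ ?_, h₁⟩
  · ext w
    simp [← h₂]
  · ext v
    simp [← h₁]

variable {BU : BilinForm ℝ U} {BW : BilinForm ℝ W} {Q : BilinForm ℝ V} {Q' : BilinForm ℝ V'}
  {J : V →ₗ[ℝ] Module.End ℝ U} {J' : V' →ₗ[ℝ] Module.End ℝ W}

theorem transpose_isotropic [Nontrivial W] (hΦ : PreservesBracket Φ br br')
    (hBU : BU.SeparatingLeft) (hJ : ∀ z, J z * J z = -(Q z z) • (1 : Module.End ℝ U))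
    (hJ' : ∀ z, J' z * J' z = -(Q' z z) • (1 : Module.End ℝ W))
    (hbr : ∀ z x y, BU (J z x) y = Q z (br x y)) (hbr' : ∀ z x y, BW (J' z x) y = Q' z (br' x y))
    {φ : V →ₗ[ℝ] V'} (hφ : ∀ v, Φ (0, v) = (0, φ v))
    {ψ : V' →ₗ[ℝ] V} (hψ : ∀ w v, Q (ψ w) v = Q' w (φ v)) {w : V'} (hw : Q' w w = 0) :
    Q (ψ w) (ψ w) = 0 := by
  obtain ⟨x', hx', hJx'⟩ := exists_apply_eq_zero_of_bilin_self_eq_zero hJ' hw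
  set a := Φ.symm (x', 0)
  have hΦa : Φ a = (x', 0) := Φ.apply_symm_apply _
  have ha : a.1 ≠ 0 := by
    intro h0
    have hcenter : Φ a = (0, φ a.2) := by rw [← hφ]; exact congrArg Φ (Prod.ext h0 rfl)
    rw [hΦa] at hcenter
    exact hx' (congrArg Prod.fst hcenter)
  refine bilin_self_eq_zero_of_apply_eq_zero hJ ha (hBU _ fun y => ?_)
  have hbracket : φ (br a.1 y) = br' x' (Φ (y, 0)).1 := by
    simpa [hφ, hΦa] using congrArg Prod.snd (hΦ a (y, 0))
  calc BU (J (ψ w) a.1) y = Q' w (br' x' (Φ (y, 0)).1) := by rw [hbr, hψ, hbracket]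
    _ = 0 := by rw [← hbr', hJx', map_zero, LinearMap.zero_apply]

theorem exists_equiv_map_isotropic [FiniteDimensional ℝ V] [FiniteDimensional ℝ V']
    [Nontrivial W] (hΦ : PreservesBracket Φ br br')
    (hspan : Submodule.span ℝ (Set.range fun p : U × U => br p.1 p.2) = ⊤)
    (hspan' : Submodule.span ℝ (Set.range fun p : W × W => br' p.1 p.2) = ⊤)
    (hBU : BU.SeparatingLeft) (hQ : Q.Nondegenerate) (hQ' : Q'.Nondegenerate)
    (hJ : ∀ z, J z * J z = -(Q z z) • (1 : Module.End ℝ U))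
    (hJ' : ∀ z, J' z * J' z = -(Q' z z) • (1 : Module.End ℝ W))
    (hbr : ∀ z x y, BU (J z x) y = Q z (br x y)) (hbr' : ∀ z x y, BW (J' z x) y = Q' z (br' x y)) :
    ∃ ψ : V' ≃ₗ[ℝ] V, ∀ w, Q' w w = 0 → Q (ψ w) (ψ w) = 0 := by
  obtain ⟨φ, hφ⟩ := hΦ.exists_centerEquiv hspan hspan'
  -- `ψ` is the transpose of `φ` with respect to `Q'` and `Q`
  let ψ : V' ≃ₗ[ℝ] V := (Q'.toDual hQ').trans (φ.dualMap.trans (Q.toDual hQ).symm)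
  refine ⟨ψ, fun w => hΦ.transpose_isotropic hBU hJ hJ' hbr hbr' hφ (ψ := ψ.toLinearMap)
    (fun w v => ?_)⟩
  simp [ψ, LinearMap.BilinForm.apply_toDual_symm_apply, LinearMap.BilinForm.toDual_def]

end PreservesBracket

end Isomorphism

theorem pseudo_H_type_isomorphism_signature_general
    {U W : Type*} [AddCommGroup U] [Module ℝ U] [Nontrivial U]
    [AddCommGroup W] [Module ℝ W] [Nontrivial W]
    (n r s r' s' : ℕ) (hrs : r + s = n) (hr's' : r' + s' = n)
    (BU : LinearMap.BilinForm ℝ U) (hBUnd : BU.Nondegenerate)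
    (BW : LinearMap.BilinForm ℝ W) (hBWnd : BW.Nondegenerate)
    (J : (Fin n → ℝ) →ₗ[ℝ] Module.End ℝ U)
    (hJ : ∀ z, J z * J z = -(stdForm n r z z) • (1 : Module.End ℝ U))
    (J' : (Fin n → ℝ) →ₗ[ℝ] Module.End ℝ W)
    (hJ' : ∀ z, J' z * J' z = -(stdForm n r' z z) • (1 : Module.End ℝ W))
    (br : U →ₗ[ℝ] U →ₗ[ℝ] (Fin n → ℝ))
    (hbr : ∀ (z : Fin n → ℝ) (x y : U), BU (J z x) y = stdForm n r z (br x y))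
    (br' : W →ₗ[ℝ] W →ₗ[ℝ] (Fin n → ℝ))
    (hbr' : ∀ (z : Fin n → ℝ) (x y : W), BW (J' z x) y = stdForm n r' z (br' x y))
    (Φ : (U × (Fin n → ℝ)) ≃ₗ[ℝ] (W × (Fin n → ℝ)))
    (hΦ : ∀ a b : U × (Fin n → ℝ),
      Φ ((0 : U), br a.1 b.1) = ((0 : W), br' (Φ a).1 (Φ b).1)) :
    (r' = r ∧ s' = s) ∨ (r' = s ∧ s' = r) := by
  have hΦ : PreservesBracket Φ br br' := hΦ
  have hQ := stdForm.nondegenerate n r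
  have hQ' := stdForm.nondegenerate n r'
  have hspan := span_bracket_eq_top hBUnd.1 hQ
    (injective_of_clifford hQ.1 (stdForm.isSymm n r) hJ) hbr
  have hspan' := span_bracket_eq_top hBWnd.1 hQ'
    (injective_of_clifford hQ'.1 (stdForm.isSymm n r') hJ') hbr'
  obtain ⟨ψ, hψ⟩ := hΦ.exists_equiv_map_isotropic hspan hspan' hBUnd.1 hQ hQ' hJ hJ' hbr hbr'
  obtain ⟨ψ', hψ'⟩ := hΦ.symm.exists_equiv_map_isotropic hspan' hspan hBWnd.1 hQ' hQ hJ' hJ hbr' hbr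
  have := stdForm.min_le_min_of_isotropic hrs hr's' ψ hψ
  have := stdForm.min_le_min_of_isotropic hr's' hrs ψ' hψ'
  omega

/-- If `Φ` is a Lie algebra isomorphism between pseudo `H`-type algebras
`N_{r,s}(U)` and `N_{r',s'}(W)` with `dim U = dim W`, `r + s = r' + s' = n` and `r ≠ s`,
then `(r', s') = (r, s)` or `(r', s') = (s, r)`. -/
theorem pseudo_H_type_isomorphism_signature
    {U W : Type*} [AddCommGroup U] [Module ℝ U] [FiniteDimensional ℝ U] [Nontrivial U]
    [AddCommGroup W] [Module ℝ W] [FiniteDimensional ℝ W] [Nontrivial W]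
    (n r s r' s' : ℕ) (hrs : r + s = n) (hr's' : r' + s' = n) (hne : r ≠ s)
    (hdim : Module.finrank ℝ U = Module.finrank ℝ W)
    (BU : LinearMap.BilinForm ℝ U) (hBUnd : BU.Nondegenerate)
    (hBUsymm : ∀ x y : U, BU x y = BU y x)
    (BW : LinearMap.BilinForm ℝ W) (hBWnd : BW.Nondegenerate)
    (hBWsymm : ∀ x y : W, BW x y = BW y x)
    (J : (Fin n → ℝ) →ₗ[ℝ] Module.End ℝ U)
    (hJ : ∀ z, J z * J z = -(stdForm n r z z) • (1 : Module.End ℝ U))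
    (hJskew : ∀ (z : Fin n → ℝ) (x y : U), BU (J z x) y + BU x (J z y) = 0)
    (J' : (Fin n → ℝ) →ₗ[ℝ] Module.End ℝ W)
    (hJ' : ∀ z, J' z * J' z = -(stdForm n r' z z) • (1 : Module.End ℝ W))
    (hJ'skew : ∀ (z : Fin n → ℝ) (x y : W), BW (J' z x) y + BW x (J' z y) = 0)
    (br : U →ₗ[ℝ] U →ₗ[ℝ] (Fin n → ℝ))
    (hbr : ∀ (z : Fin n → ℝ) (x y : U), BU (J z x) y = stdForm n r z (br x y))
    (br' : W →ₗ[ℝ] W →ₗ[ℝ] (Fin n → ℝ))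
    (hbr' : ∀ (z : Fin n → ℝ) (x y : W), BW (J' z x) y = stdForm n r' z (br' x y))
    (Φ : (U × (Fin n → ℝ)) ≃ₗ[ℝ] (W × (Fin n → ℝ)))
    (hΦ : ∀ a b : U × (Fin n → ℝ),
      Φ ((0 : U), br a.1 b.1) = ((0 : W), br' (Φ a).1 (Φ b).1)) :
    (r' = r ∧ s' = s) ∨ (r' = s ∧ s' = r) :=
  pseudo_H_type_isomorphism_signature_general n r s r' s' hrs hr's' BU hBUnd BW hBWnd J hJ J' hJ' br
    hbr br' hbr' Φ hΦ
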